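/- arXiv:2011.13848 — 4 statements merged into one kernel-verified Lean document; each statement's English description precedes it below -/
import Mathlib

section
/- The bilinear form ι on Sym^n(ℂ²) given by the symmetrized product of n copies of ε is nondegenerate. -/
/-- The SU(2)-invariant antisymmetric form on ℂ². -/
def eps (v w : Fin 2 → ℂ) : ℂ := v 0 * w 1 - v 1 * w 0

/-- The bilinear form `ι` on `Sym^n(ℂ²)` given on symmetrized products of spinors. -/
noncomputable def iotaForm (n : ℕ) (v w : Fin n → (Fin 2 → ℂ)) : ℂ :=
  ((n.factorial : ℂ))⁻¹ *
    ∑ σ : Equiv.Perm (Fin n), ∏ k : Fin n, eps (v k) (w (σ k))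

/-- The basis vector of `Sym^n(ℂ²)` with `a` factors `e₁` and `n - a` factors `e₀`. -/
def basisVec (n : ℕ) (a : Fin (n + 1)) : Fin n → (Fin 2 → ℂ) := fun k =>
  if (k : ℕ) < (a : ℕ) then (fun i => if i = 1 then 1 else 0)
  else (fun i => if i = 0 then 1 else 0)

/-- The Gram matrix of `ι` in the monomial basis of `Sym^n(ℂ²)`. -/
noncomputable def iotaGram (n : ℕ) : Matrix (Fin (n + 1)) (Fin (n + 1)) ℂ :=
  fun a b => iotaForm n (basisVec n a) (basisVec n b)

/-! `ε` pairs `e₁` only with `e₀`, so in `ι(e_a, e_b)` a permutation contributes only if it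
carries the `a` slots holding `e₁` onto the `n - b` slots holding `e₀` and vice versa. Counting
slots, such permutations exist (e.g. the reversal of `Fin n`) exactly when `a + b = n`, and each
contributes `(-1)^a`. So the Gram matrix is antidiagonal with nonzero antidiagonal entries. -/

open Finset Equiv

theorem Matrix.det_ne_zero_of_ne_zero_iff_eq_rev {R : Type*} [CommRing R] [IsDomain R] {m : ℕ}
    (M : Matrix (Fin m) (Fin m) R) (hM : ∀ a b, M a b ≠ 0 ↔ b = a.rev) : M.det ≠ 0 := by
  have hdiag : M.submatrix id Fin.revPerm = Matrix.diagonal fun a => M a a.rev := by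
    ext a b
    by_cases hab : a = b
    · simp [hab]
    · simpa [Matrix.diagonal_apply_ne _ hab, Fin.rev_eq_iff, Ne.symm hab] using (hM a b.rev).not
  have hperm := Matrix.det_permute' Fin.revPerm M
  rw [hdiag, Matrix.det_diagonal] at hperm
  intro h0
  rw [h0, mul_zero, prod_eq_zero_iff] at hperm
  obtain ⟨a, -, ha⟩ := hperm
  exact (hM a a.rev).mpr rfl ha

theorem Fintype.card_subtype_add_card_subtype_of_perm {α : Type*} [Fintype α] {p q : α → Prop}
    [DecidablePred p] [DecidablePred q] (σ : Perm α) (h : ∀ k, p k ↔ ¬ q (σ k)) :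
    card {k // p k} + card {j // q j} = card α := by
  rw [card_congr (σ.subtypeEquiv (q := fun j => ¬ q j) h), card_subtype_compl]
  have hq := card_subtype_le q
  omega

theorem eps_basisVec (n : ℕ) (a b : Fin (n + 1)) (k j : Fin n) :
    eps (basisVec n a k) (basisVec n b j) =
      if ((k : ℕ) < a ↔ ¬ (j : ℕ) < b) then (if (k : ℕ) < a then -1 else 1) else 0 := by
  simp only [eps, basisVec]
  split_ifs <;> simp_all

theorem Fin.prod_ite_val_lt_eq_pow {M : Type*} [CommMonoid M] {n a : ℕ} (ha : a ≤ n) (x : M) :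
    ∏ k : Fin n, (if (k : ℕ) < a then x else 1) = x ^ a := by
  rw [Finset.prod_ite, Finset.prod_const, Finset.prod_const_one, mul_one, card_filter_val_lt,
    min_eq_right ha]

theorem iotaGram_apply (n : ℕ) (a b : Fin (n + 1)) :
    iotaGram n a b = (n.factorial : ℂ)⁻¹ *
      (#{σ : Perm (Fin n) | ∀ k : Fin n, (k : ℕ) < a ↔ ¬ (σ k : ℕ) < b} * (-1) ^ (a : ℕ)) := by
  simp only [iotaGram, iotaForm, eps_basisVec, Fintype.prod_ite_zero,
    Fin.prod_ite_val_lt_eq_pow a.is_le (-1 : ℂ), sum_ite, sum_const_zero, add_zero, sum_const,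
    nsmul_eq_mul]

theorem card_perm_val_lt_iff_not_val_lt_ne_zero_iff {n a b : ℕ} (ha : a ≤ n) (hb : b ≤ n) :
    #{σ : Perm (Fin n) | ∀ k : Fin n, (k : ℕ) < a ↔ ¬ (σ k : ℕ) < b} ≠ 0 ↔ a + b = n := by
  constructor
  · intro h
    obtain ⟨σ, hσ⟩ := card_ne_zero.mp h
    have hcard := Fintype.card_subtype_add_card_subtype_of_perm
      (p := fun k : Fin n => (k : ℕ) < a) (q := fun j : Fin n => (j : ℕ) < b) σ
      (mem_filter.mp hσ).2
    rwa [Fintype.card_fin_lt_of_le ha, Fintype.card_fin_lt_of_le hb, Fintype.card_fin] at hcard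
  · rintro rfl
    refine card_ne_zero_of_mem (a := Fin.revPerm) (mem_filter.mpr ⟨mem_univ _, fun k => ?_⟩)
    simp only [Fin.revPerm_apply, Fin.val_rev]
    omega

theorem iotaGram_ne_zero_iff (n : ℕ) (a b : Fin (n + 1)) : iotaGram n a b ≠ 0 ↔ b = a.rev := by
  rw [iotaGram_apply, mul_ne_zero_iff, mul_ne_zero_iff, Nat.cast_ne_zero,
    card_perm_val_lt_iff_not_val_lt_ne_zero_iff a.is_le b.is_le, Fin.ext_iff, Fin.val_rev]
  simp only [ne_eq, inv_eq_zero, Nat.cast_eq_zero, Nat.factorial_ne_zero, not_false_eq_true,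
    pow_eq_zero_iff', neg_eq_zero, one_ne_zero, false_and, and_true, true_and]
  omega

/-- The form `ι` on `Sym^n(ℂ²)` is nondegenerate: its Gram matrix in a basis
has nonzero determinant, equivalently no nonzero vector pairs trivially with
everything. -/
theorem iotaForm_nondegenerate (n : ℕ) :
    (iotaGram n).det ≠ 0 ∧
    ∀ c : Fin (n + 1) → ℂ,
      (∀ b, ∑ a, c a * iotaGram n a b = 0) → c = 0 := by
  have hdet : (iotaGram n).det ≠ 0 :=
    Matrix.det_ne_zero_of_ne_zero_iff_eq_rev _ (iotaGram_ne_zero_iff n)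
  refine ⟨hdet, fun c hc => ?_⟩
  by_contra hc0
  exact hdet (Matrix.exists_vecMul_eq_zero_iff.mp ⟨c, hc0, funext hc⟩)
end

section
/- Let p, q, r be distinct points and let S = ∑ θ(p)^A ε_{AB} M^B_C θ(q)^C (creation of two particles joined by matrix M) and T = ∑ θ†(q)_A N^A_B θ(r)^B (transport from r to q), with M, N complex 2×2 matrices and θ, θ† creation/annihilation operators reinterpreted appropriately on the fermionic Fock space. Then the anticommutator algebra yields {S, T}-type composition producing ∑ θ(p)^A ε_{AB} (MN)^B_C θ(r)^C, i.e. concatenation of the matrices along the shared point q. -/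
/-
In any ring, with `{a, b} = ab + ba`,
`xy·zw - zw·xy = x{y,z}w - xz{y,w} + {x,z}wy - z{x,w}y`.
Take `x, y` creators at `p, q` and `z, w` an annihilator at `q` and a creator at `r`. Creators
anticommute, `{θ(q)^C, θ†(q)_C'} = δ_CC'`, and `θ(p)` anticommutes with `θ†(q)` as `p ≠ q`, so only
the first term survives: the commutator of the generators is `δ_CC' θ(p)^A θ(r)^D`. Summing against
the coefficients contracts the shared index `C` and turns `εM` and `N` into `εMN`.
-/

noncomputable section

/-- The one-particle space `⊕_{x∈X} ℂ^d`: finitely supported `ℂ^d`-valued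
functions on the spatial slice `X`. -/
abbrev OneParticle (X : Type) (d : ℕ) := X →₀ (Fin d → ℂ)

/-- The antisymmetric (fermionic) Fock space over the one-particle space,
realized as the exterior algebra. -/
abbrev FockSpace (X : Type) (d : ℕ) := ExteriorAlgebra ℂ (OneParticle X d)

/-- The one-particle state of a spin component `A` located at the point `x`. -/
def pointState (X : Type) (d : ℕ) (x : X) (A : Fin d) : OneParticle X d :=
  Finsupp.single x (Pi.single A 1)

/-- The creation operator `θ†(x)_A`: exterior multiplication by the
corresponding one-particle state. -/
def cre (X : Type) (d : ℕ) (x : X) (A : Fin d) : Module.End ℂ (FockSpace X d) :=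
  LinearMap.mulLeft ℂ (ExteriorAlgebra.ι ℂ (pointState X d x A))

/-- The coordinate functional extracting the `(x, A)` component. -/
def coordDual (X : Type) (d : ℕ) (x : X) (A : Fin d) :
    Module.Dual ℂ (OneParticle X d) :=
  (LinearMap.proj A).comp
    (Finsupp.lapply x : OneParticle X d →ₗ[ℂ] (Fin d → ℂ))

/-- The annihilation operator `θ(x)^A`: interior product (left contraction)
with the coordinate functional. -/
def ann (X : Type) (d : ℕ) (x : X) (A : Fin d) : Module.End ℂ (FockSpace X d) :=
  CliffordAlgebra.contractLeft (Q := (0 : QuadraticForm ℂ (OneParticle X d)))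
    (coordDual X d x A)


/-- The antisymmetric ε tensor on spinor indices. -/
def epsM : Matrix (Fin 2) (Fin 2) ℂ := !![0, 1; -1, 0]

theorem mul_mul_sub_mul_mul_of_anticommute {R : Type*} [Ring R] {x y z w : R}
    (hxz : x * z + z * x = 0) (hxw : x * w + w * x = 0) (hyw : y * w + w * y = 0) :
    x * y * (z * w) - z * w * (x * y) = x * (y * z + z * y) * w := by
  calc x * y * (z * w) - z * w * (x * y)
      = x * (y * z + z * y) * w - x * z * (y * w + w * y) + (x * z + z * x) * w * y
          - z * (x * w + w * x) * y := by noncomm_ring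
    _ = x * (y * z + z * y) * w := by rw [hxz, hxw, hyw]; noncomm_ring

theorem Finset.sum_mul_sum_sub_sum_mul_sum {ι κ R : Type*} [Ring R] (s : Finset ι)
    (t : Finset κ) (f : ι → R) (g : κ → R) :
    (∑ i ∈ s, f i) * (∑ j ∈ t, g j) - (∑ j ∈ t, g j) * (∑ i ∈ s, f i) =
      ∑ i ∈ s, ∑ j ∈ t, (f i * g j - g j * f i) := by
  simp only [Finset.sum_mul_sum, Finset.sum_sub_distrib]
  rw [Finset.sum_comm (s := t)]

theorem smul_mul_smul_sub_smul_mul_smul {R A : Type*} [CommSemiring R] [Ring A] [Module R A]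
    [IsScalarTower R A A] [SMulCommClass R A A]
    (a b : R) (x y : A) :
    a • x * (b • y) - b • y * (a • x) = (a * b) • (x * y - y * x) := by
  rw [smul_mul_smul_comm, smul_mul_smul_comm, mul_comm b, smul_sub]

theorem sum_sum_sum_mul_smul_eq_sum_sum_mul_apply_smul {ι R M : Type*} [Fintype ι] [Semiring R]
    [AddCommMonoid M] [Module R M] (P Q : Matrix ι ι R) (f : ι → ι → M) :
    ∑ A, ∑ B, ∑ C, (P A B * Q B C) • f A C = ∑ A, ∑ C, (P * Q) A C • f A C := by
  simp only [Matrix.mul_apply, Finset.sum_smul]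
  exact Finset.sum_congr rfl fun A _ => Finset.sum_comm

section
variable {X : Type} {d : ℕ}

theorem cre_mul_cre_add_cre_mul_cre (x y : X) (A B : Fin d) :
    cre X d x A * cre X d y B + cre X d y B * cre X d x A = 0 := by
  refine LinearMap.ext fun z => ?_
  simp only [cre, LinearMap.add_apply, Module.End.mul_apply, LinearMap.mulLeft_apply,
    ← mul_assoc, ← add_mul, ExteriorAlgebra.ι_add_mul_swap, zero_mul, LinearMap.zero_apply]

theorem cre_mul_ann_add_ann_mul_cre (x y : X) (A B : Fin d) :
    cre X d y B * ann X d x A + ann X d x A * cre X d y B =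
      coordDual X d x A (pointState X d y B) • 1 := by
  refine LinearMap.ext fun z => ?_
  simp only [ann, cre, LinearMap.add_apply, Module.End.mul_apply, LinearMap.mulLeft_apply,
    LinearMap.smul_apply, Module.End.one_apply]
  rw [CliffordAlgebra.contractLeft_ι_mul, add_sub_cancel]

theorem coordDual_pointState_of_ne {x y : X} (h : x ≠ y) (A B : Fin d) :
    coordDual X d x A (pointState X d y B) = 0 := by
  simp [coordDual, pointState, Finsupp.single_eq_of_ne h]

theorem coordDual_pointState_self (x : X) (A B : Fin d) :
    coordDual X d x A (pointState X d x B) = if A = B then 1 else 0 := by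
  simp [coordDual, pointState, Pi.single_apply]

theorem commutator_cre_mul_cre_ann_mul_cre {p q : X} (hpq : p ≠ q) (r : X) (A C C' D : Fin d) :
    cre X d p A * cre X d q C * (ann X d q C' * cre X d r D) -
        ann X d q C' * cre X d r D * (cre X d p A * cre X d q C) =
      (if C' = C then (1 : ℂ) else 0) • (cre X d p A * cre X d r D) := by
  rw [mul_mul_sub_mul_mul_of_anticommute, cre_mul_ann_add_ann_mul_cre, coordDual_pointState_self,
    mul_smul_one, smul_mul_assoc]
  · rw [cre_mul_ann_add_ann_mul_cre, coordDual_pointState_of_ne hpq.symm, zero_smul]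
  · exact cre_mul_cre_add_cre_mul_cre p r A D
  · exact cre_mul_cre_add_cre_mul_cre q r C D

theorem commutator_sum_cre_mul_cre_sum_ann_mul_cre {p q : X} (hpq : p ≠ q) (r : X)
    (P N : Fin d → Fin d → ℂ) :
    (∑ A, ∑ C, P A C • (cre X d p A * cre X d q C)) *
          (∑ C', ∑ D, N C' D • (ann X d q C' * cre X d r D)) -
        (∑ C', ∑ D, N C' D • (ann X d q C' * cre X d r D)) *
          (∑ A, ∑ C, P A C • (cre X d p A * cre X d q C)) =
      ∑ A, ∑ D, (∑ C, P A C * N C D) • (cre X d p A * cre X d r D) := by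
  simp only [Finset.sum_mul_sum_sub_sum_mul_sum,
    smul_mul_smul_sub_smul_mul_smul (A := Module.End ℂ (FockSpace X d)),
    commutator_cre_mul_cre_ann_mul_cre hpq, smul_smul, Finset.sum_smul]
  simp only [mul_ite, mul_one, mul_zero, ite_smul, zero_smul, Finset.sum_ite_irrel,
    Finset.sum_const_zero, Finset.sum_ite_eq, Finset.mem_univ, if_true]
  exact Finset.sum_congr rfl fun A _ => Finset.sum_comm

end

theorem path_observable_composition_general (X : Type) (p q r : X)
    (hpq : p ≠ q)
    (M N : Matrix (Fin 2) (Fin 2) ℂ)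
    (S T : Module.End ℂ (FockSpace X 2))
    (hS : S = ∑ A : Fin 2, ∑ B : Fin 2, ∑ C : Fin 2,
      (epsM A B * M B C) • (cre X 2 p A * cre X 2 q C))
    (hT : T = ∑ A : Fin 2, ∑ B : Fin 2,
      N A B • (ann X 2 q A * cre X 2 r B)) :
    S * T - T * S = ∑ A : Fin 2, ∑ B : Fin 2, ∑ C : Fin 2,
      (epsM A B * (M * N) B C) • (cre X 2 p A * cre X 2 r C) := by
  rw [hS, hT, sum_sum_sum_mul_smul_eq_sum_sum_mul_apply_smul,
    sum_sum_sum_mul_smul_eq_sum_sum_mul_apply_smul,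
    commutator_sum_cre_mul_cre_sum_ann_mul_cre hpq r (epsM * M) N]
  simp only [← Matrix.mul_apply, Matrix.mul_assoc]

/-- Composition of path observables at a shared endpoint concatenates the
holonomy matrices: for distinct points `p, q, r`, the commutator of the
two-particle creator `S = ∑ θ(p)^A ε_{AB} M^B_C θ(q)^C` with the transport
`T = ∑ θ†(q)_A N^A_B θ(r)^B` is the creator joining `p` to `r` by `M·N`. -/
theorem path_observable_composition (X : Type) (p q r : X)
    (hpq : p ≠ q) (hqr : q ≠ r) (hpr : p ≠ r)
    (M N : Matrix (Fin 2) (Fin 2) ℂ)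
    (S T : Module.End ℂ (FockSpace X 2))
    (hS : S = ∑ A : Fin 2, ∑ B : Fin 2, ∑ C : Fin 2,
      (epsM A B * M B C) • (cre X 2 p A * cre X 2 q C))
    (hT : T = ∑ A : Fin 2, ∑ B : Fin 2,
      N A B • (ann X 2 q A * cre X 2 r B)) :
    S * T - T * S = ∑ A : Fin 2, ∑ B : Fin 2, ∑ C : Fin 2,
      (epsM A B * (M * N) B C) • (cre X 2 p A * cre X 2 r C) :=
  path_observable_composition_general X p q r hpq M N S T hS hT

end
end

section
/- For two spin-j particles created at points p ≠ q joined by a holonomy in the spin-j representation, the state Ψ = ∑ θ(p)^𝒜 ι_{𝒜𝒝} ρ_j(h)^𝒝_𝒞 θ(q)^𝒞 |0⟩ is invariant under the simultaneous replacement p ↔ q, h ↦ h⁻¹ (with the corresponding index rearrangement), provided the particles obey fermionic statistics when 2j is odd and bosonic statistics when 2j is even. Concretely: ∑ θ(q)^𝒜 ι_{𝒜𝒝} ρ_j(h⁻¹)^𝒝_𝒞 θ(p)^𝒞 = ∑ θ(p)^𝒜 ι_{𝒜𝒝} ρ_j(h)^𝒝_𝒞 θ(q)^𝒞 as operators, where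 the θ's (anti)commute according to (-1)^{2j}. -/
/-- The two-particle singlet state is invariant under the simultaneous
exchange `p ↔ q`, `h ↦ h⁻¹`, provided the creation operators obey the
spin-statistics connection (sign `(-1)^{2j}` under exchange, `n = 2j`):
`∑ θ(q)^𝒜 ι_{𝒜𝒝} ρ_j(h⁻¹)^𝒝_𝒞 θ(p)^𝒞 = ∑ θ(p)^𝒜 ι_{𝒜𝒝} ρ_j(h)^𝒝_𝒞 θ(q)^𝒞`. -/
theorem singlet_exchange_invariant {A : Type*} [Ring A] [Algebra ℂ A]
    (n m : ℕ) {X : Type*} (θ : X → Fin m → A) (p q : X) (hpq : p ≠ q)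
    (R Rinv ι : Matrix (Fin m) (Fin m) ℂ)
    (hR : R * Rinv = 1) (hR' : Rinv * R = 1)
    (hsym : Matrix.transpose ι = (-1 : ℂ) ^ n • ι)
    (hinv : Matrix.transpose R * ι * R = ι)
    (hstat : ∀ a c : Fin m, θ p a * θ q c = (-1 : ℂ) ^ n • (θ q c * θ p a)) :
    ∑ a, ∑ b, ∑ c, (ι a b * Rinv b c) • (θ q a * θ p c)
      = ∑ a, ∑ b, ∑ c, (ι a b * R b c) • (θ p a * θ q c) := by
  have hsign : ((-1 : ℂ) ^ n) * ((-1 : ℂ) ^ n) = 1 := by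
    rw [← pow_add, ← two_mul, pow_mul]; norm_num
  -- intertwining: ι * Rinv = Rᵀ * ι
  have h1 : ι * Rinv = Matrix.transpose R * ι := by
    calc ι * Rinv = (Matrix.transpose R * ι * R) * Rinv := by rw [hinv]
      _ = Matrix.transpose R * ι * (R * Rinv) := by rw [mul_assoc]
      _ = Matrix.transpose R * ι := by rw [hR, mul_one]
  -- entrywise antisymmetry of ι
  have hι : ∀ b c : Fin m, ι b c = (-1 : ℂ) ^ n * ι c b := by
    intro b c
    have := congrFun (congrFun hsym c) b
    simp only [Matrix.transpose_apply, Matrix.smul_apply, smul_eq_mul] at this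
    exact this
  -- entrywise version of the intertwining relation
  have hent : ∀ a c : Fin m,
      ∑ b, ι a b * Rinv b c = (-1 : ℂ) ^ n * ∑ b, ι c b * R b a := by
    intro a c
    have := congrFun (congrFun h1 a) c
    simp only [Matrix.mul_apply, Matrix.transpose_apply] at this
    rw [this, Finset.mul_sum]
    refine Finset.sum_congr rfl fun b _ => ?_
    rw [hι b c]; ring
  -- statistics relation in the needed direction
  have hstat' : ∀ a c : Fin m,
      θ q a * θ p c = (-1 : ℂ) ^ n • (θ p c * θ q a) := by
    intro a c
    rw [hstat c a, smul_smul, hsign, one_smul]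
  -- collapse the b-sums
  have collapse : ∀ (M : Matrix (Fin m) (Fin m) ℂ) (u v : Fin m → A),
      (∑ a, ∑ b, ∑ c, (ι a b * M b c) • (u a * v c))
        = ∑ a, ∑ c, (∑ b, ι a b * M b c) • (u a * v c) := by
    intro M u v
    refine Finset.sum_congr rfl fun a _ => ?_
    rw [Finset.sum_comm]
    refine Finset.sum_congr rfl fun c _ => ?_
    rw [Finset.sum_smul]
  rw [collapse, collapse]
  calc ∑ a, ∑ c, (∑ b, ι a b * Rinv b c) • (θ q a * θ p c)
      = ∑ a, ∑ c, (∑ b, ι c b * R b a) • (θ p c * θ q a) := by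
        refine Finset.sum_congr rfl fun a _ => Finset.sum_congr rfl fun c _ => ?_
        rw [hent a c, hstat' a c, smul_smul]
        congr 1
        linear_combination (∑ b : Fin m, ι c b * R b a) * hsign
    _ = ∑ a, ∑ c, (∑ b, ι a b * R b c) • (θ p a * θ q c) := Finset.sum_comm
end

section
/- With the conventions above but with the 'wrong' statistics — θ(p)^𝒜 θ(q)^𝒞 = -(-1)^{2j} θ(q)^𝒞 θ(p)^𝒜 for p ≠ q — the exchanged state equals minus the original: ∑ θ(q)^𝒜 ι_{𝒜𝒝} ρ_j(h⁻¹)^𝒝_𝒞 θ(p)^𝒞 = - ∑ θ(p)^𝒜 ι_{𝒜𝒝} ρ_j(h)^𝒝_𝒞 θ(q)^𝒞, and hence averaging over the two-element exchange symmetry group annihilates the state. -/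
/-- With the *wrong* statistics (sign `-(-1)^{2j}` under exchange of the two
particles, `n = 2j`), the exchanged singlet state equals minus the original
one, and hence averaging over the two-element exchange symmetry group
annihilates the state. -/
theorem singlet_wrong_statistics_killed {A : Type*} [Ring A] [Algebra ℂ A]
    (n m : ℕ) {X : Type*} (θ : X → Fin m → A) (p q : X) (hpq : p ≠ q)
    (R Rinv ι : Matrix (Fin m) (Fin m) ℂ)
    (hR : R * Rinv = 1) (hR' : Rinv * R = 1)
    (hsym : Matrix.transpose ι = (-1 : ℂ) ^ n • ι)
    (hinv : Matrix.transpose R * ι * R = ι)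
    (hstat : ∀ a c : Fin m, θ p a * θ q c = -((-1 : ℂ) ^ n) • (θ q c * θ p a)) :
    (∑ a, ∑ b, ∑ c, (ι a b * Rinv b c) • (θ q a * θ p c)
        = -∑ a, ∑ b, ∑ c, (ι a b * R b c) • (θ p a * θ q c))
    ∧ ((2 : ℂ)⁻¹ • ((∑ a, ∑ b, ∑ c, (ι a b * R b c) • (θ p a * θ q c))
        + ∑ a, ∑ b, ∑ c, (ι a b * Rinv b c) • (θ q a * θ p c)) = 0) := by
  have hsq : (-((-1 : ℂ) ^ n)) * (-((-1 : ℂ) ^ n)) = 1 := by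
    rw [neg_mul_neg, ← pow_add]
    exact Even.neg_one_pow ⟨n, rfl⟩
  -- the opposite exchange relation
  have hstat' : ∀ a c : Fin m,
      θ q a * θ p c = -((-1 : ℂ) ^ n) • (θ p c * θ q a) := by
    intro a c
    rw [hstat c a, smul_smul, hsq, one_smul]
  -- ι * Rinv = Rᵀ * ι
  have h1 : ι * Rinv = Matrix.transpose R * ι := by
    calc ι * Rinv = (Matrix.transpose R * ι * R) * Rinv := by rw [hinv]
    _ = Matrix.transpose R * ι * (R * Rinv) := by rw [mul_assoc]
    _ = Matrix.transpose R * ι := by rw [hR, mul_one]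
  have hι : ∀ b c : Fin m, ι b c = (-1 : ℂ) ^ n * ι c b := by
    intro b c
    have := congrFun (congrFun hsym c) b
    simpa [Matrix.transpose_apply] using this
  have key : ∀ a c : Fin m,
      ∑ b, ι a b * Rinv b c = (-1 : ℂ) ^ n * ∑ b, ι c b * R b a := by
    intro a c
    have h2 := congrFun (congrFun h1 a) c
    rw [Matrix.mul_apply, Matrix.mul_apply] at h2
    rw [h2, Finset.mul_sum]
    refine Finset.sum_congr rfl fun b _ => ?_
    rw [Matrix.transpose_apply, hι b c]
    ring
  -- pointwise exchange identity
  have point : ∀ a c : Fin m,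
      (∑ b, ι a b * Rinv b c) • (θ q a * θ p c)
        = -((∑ b, ι c b * R b a) • (θ p c * θ q a)) := by
    intro a c
    rw [key a c, hstat' a c, smul_smul, ← neg_smul]
    congr 1
    calc (-1 : ℂ) ^ n * (∑ b, ι c b * R b a) * -(-1 : ℂ) ^ n
        = ((-1 : ℂ) ^ n * -(-1 : ℂ) ^ n) * (∑ b, ι c b * R b a) := by ring
      _ = -(∑ b, ι c b * R b a) := by
          rw [show (-1 : ℂ) ^ n * -(-1 : ℂ) ^ n = -((-((-1:ℂ)^n)) * (-((-1:ℂ)^n))) by ring,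
            hsq]; ring
  have main : (∑ a, ∑ b, ∑ c, (ι a b * Rinv b c) • (θ q a * θ p c))
      = -∑ a, ∑ b, ∑ c, (ι a b * R b c) • (θ p a * θ q c) := by
    have lhs_eq : ∀ (M : Matrix (Fin m) (Fin m) ℂ) (u v : Fin m → A),
        (∑ a, ∑ b, ∑ c, (ι a b * M b c) • (u a * v c))
          = ∑ a, ∑ c, (∑ b, ι a b * M b c) • (u a * v c) := by
      intro M u v
      refine Finset.sum_congr rfl fun a _ => ?_
      rw [Finset.sum_comm]
      refine Finset.sum_congr rfl fun c _ => ?_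
      rw [Finset.sum_smul]
    rw [lhs_eq Rinv (θ q) (θ p), lhs_eq R (θ p) (θ q)]
    calc ∑ a, ∑ c, (∑ b, ι a b * Rinv b c) • (θ q a * θ p c)
        = ∑ a, ∑ c, -((∑ b, ι c b * R b a) • (θ p c * θ q a)) := by
          exact Finset.sum_congr rfl fun a _ => Finset.sum_congr rfl fun c _ => point a c
      _ = -∑ a, ∑ c, (∑ b, ι c b * R b a) • (θ p c * θ q a) := by
          simp [Finset.sum_neg_distrib]
      _ = -∑ c, ∑ a, (∑ b, ι c b * R b a) • (θ p c * θ q a) := by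
          rw [Finset.sum_comm]
      _ = -∑ a, ∑ c, (∑ b, ι a b * R b c) • (θ p a * θ q c) := rfl
  exact ⟨main, by rw [main]; simp⟩
end
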